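/- In the degenerating setup (with q_{d₁+1}, …, q_e ∈ ∂𝔻 arbitrary, repetitions allowed), let (c_n) be a sequence in 𝔻 with B_n'(c_n) = 0 for all n and c_n → c ∈ ℂ. Then either c ∈ 𝔻 and B'(c) = 0, or c ∈ {q_{d₁+1}, …, q_e}. -/

import Mathlib

/-! Split `Bₙ = Gₙ · Pₙ`, where `Gₙ` keeps `z ^ m` and the factors whose zeros stay inside the disc
and `Pₙ` collects those whose zeros tend to the circle. If `c` is none of the boundary limits
`q_k`, then `‖Pₙ(cₙ)‖ → 1` and `Pₙ'(cₙ) → 0`, while `Gₙ'(cₙ) → B'(c)` and `‖Gₙ(cₙ)‖ ≤ 1`;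
so `0 = Gₙ' Pₙ + Gₙ Pₙ'` at `cₙ` forces `B'(c) = 0`. On the circle
`z B'(z) = B(z) (m + ∑ₖ (1 - |aₖ|²) / |z - aₖ|²)` with `‖B(z)‖ = 1`, so `B'` does not vanish
there and `c ∈ 𝔻`. -/

open Filter

/-- The Blaschke product with exponent `m` and zero list `a : Fin e → ℂ`. -/
noncomputable def blaschke (m : ℕ) {e : ℕ} (a : Fin e → ℂ) (z : ℂ) : ℂ :=
  z ^ m * ∏ k, ((1 - (starRingEnd ℂ) (a k)) / (1 - a k) *
    ((z - a k) / (1 - (starRingEnd ℂ) (a k) * z)))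

open Finset Complex ComplexConjugate Topology

noncomputable section

def blaschkeFactor (a z : ℂ) : ℂ :=
  (1 - conj a) / (1 - a) * ((z - a) / (1 - conj a * z))

def blaschkeFactorDeriv (a z : ℂ) : ℂ :=
  (1 - conj a) / (1 - a) * ((1 - conj a * a) / (1 - conj a * z) ^ 2)

def blaschkeDeriv (m : ℕ) {e : ℕ} (a : Fin e → ℂ) (z : ℂ) : ℂ :=
  m * z ^ (m - 1) * ∏ k, blaschkeFactor (a k) z +
    z ^ m * ∑ k, (∏ j ∈ univ.erase k, blaschkeFactor (a j) z) * blaschkeFactorDeriv (a k) z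

end

lemma ne_one_of_norm_lt_one {a : ℂ} (ha : ‖a‖ < 1) : a ≠ 1 := by
  rintro rfl
  simp at ha

lemma blaschke_eq (m : ℕ) {e : ℕ} (a : Fin e → ℂ) (z : ℂ) :
    blaschke m a z = z ^ m * ∏ k, blaschkeFactor (a k) z := rfl

lemma hasDerivAt_blaschkeFactor {a z : ℂ} (h : 1 - conj a * z ≠ 0) :
    HasDerivAt (blaschkeFactor a) (blaschkeFactorDeriv a z) z := by
  have hden : HasDerivAt (fun w => 1 - conj a * w) (-conj a) z := by
    simpa using ((hasDerivAt_id z).const_mul (conj a)).const_sub 1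
  refine ((((hasDerivAt_id z).sub_const a).div hden h).const_mul _).congr_deriv ?_
  rw [blaschkeFactorDeriv, id]
  ring

lemma hasDerivAt_prod_blaschkeFactor {ι : Type*} [DecidableEq ι] (s : Finset ι) (a : ι → ℂ)
    {z : ℂ} (h : ∀ k ∈ s, 1 - conj (a k) * z ≠ 0) :
    HasDerivAt (fun w => ∏ k ∈ s, blaschkeFactor (a k) w)
      (∑ k ∈ s, (∏ j ∈ s.erase k, blaschkeFactor (a j) z) * blaschkeFactorDeriv (a k) z) z :=
  HasDerivAt.fun_finsetProd fun k hk => hasDerivAt_blaschkeFactor (h k hk)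

lemma hasDerivAt_blaschke (m : ℕ) {e : ℕ} (a : Fin e → ℂ) {z : ℂ}
    (h : ∀ k, 1 - conj (a k) * z ≠ 0) :
    HasDerivAt (blaschke m a) (blaschkeDeriv m a z) z :=
  (hasDerivAt_pow m z).mul (hasDerivAt_prod_blaschkeFactor univ a fun k _ => h k)

lemma norm_one_sub_conj (a : ℂ) : ‖1 - conj a‖ = ‖1 - a‖ := by
  rw [← norm_conj, map_sub, map_one, conj_conj]

lemma norm_blaschkeFactor {a : ℂ} (ha : a ≠ 1) (z : ℂ) :
    ‖blaschkeFactor a z‖ = ‖z - a‖ / ‖1 - conj a * z‖ := by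
  have : ‖1 - a‖ ≠ 0 := norm_ne_zero_iff.2 (sub_ne_zero.2 (Ne.symm ha))
  rw [blaschkeFactor, norm_mul, norm_div, norm_div, norm_one_sub_conj, div_self this, one_mul]

lemma norm_blaschkeFactorDeriv {a : ℂ} (ha : a ≠ 1) (z : ℂ) :
    ‖blaschkeFactorDeriv a z‖ = ‖1 - conj a * a‖ / ‖1 - conj a * z‖ ^ 2 := by
  have : ‖1 - a‖ ≠ 0 := norm_ne_zero_iff.2 (sub_ne_zero.2 (Ne.symm ha))
  rw [blaschkeFactorDeriv, norm_mul, norm_div, norm_div, norm_one_sub_conj, div_self this,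
    one_mul, norm_pow]

lemma normSq_one_sub_conj_mul_sub_normSq_sub (a z : ℂ) :
    normSq (1 - conj a * z) - normSq (z - a) = (1 - normSq a) * (1 - normSq z) := by
  simp only [normSq_apply, mul_re, mul_im, sub_re, sub_im, one_re, one_im, conj_re, conj_im]
  ring

lemma one_sub_conj_mul_ne_zero {a z : ℂ} (ha : ‖a‖ < 1) (hz : ‖z‖ ≤ 1) :
    1 - conj a * z ≠ 0 := by
  have : ‖conj a * z‖ < 1 := by
    rw [norm_mul, norm_conj]
    exact mul_lt_one_of_nonneg_of_lt_one_left (norm_nonneg a) ha hz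
  rw [sub_ne_zero]
  rintro h
  rw [← h, norm_one] at this
  exact lt_irrefl _ this

lemma norm_sub_le_norm_one_sub_conj_mul {a z : ℂ} (ha : ‖a‖ ≤ 1) (hz : ‖z‖ ≤ 1) :
    ‖z - a‖ ≤ ‖1 - conj a * z‖ := by
  have key := normSq_one_sub_conj_mul_sub_normSq_sub a z
  simp only [normSq_eq_norm_sq] at key
  have : 0 ≤ (1 - ‖a‖ ^ 2) * (1 - ‖z‖ ^ 2) :=
    mul_nonneg (by nlinarith [norm_nonneg a]) (by nlinarith [norm_nonneg z])
  exact (pow_le_pow_iff_left₀ (norm_nonneg _) (norm_nonneg _) two_ne_zero).1 (by linarith)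

lemma norm_one_sub_conj_mul_eq_norm_sub {a z : ℂ} (h : ‖a‖ = 1 ∨ ‖z‖ = 1) :
    ‖1 - conj a * z‖ = ‖z - a‖ := by
  have key := normSq_one_sub_conj_mul_sub_normSq_sub a z
  simp only [normSq_eq_norm_sq] at key
  have : (1 - ‖a‖ ^ 2) * (1 - ‖z‖ ^ 2) = 0 := by rcases h with h | h <;> simp [h]
  exact (pow_left_inj₀ (norm_nonneg _) (norm_nonneg _) two_ne_zero).1 (by linarith)

lemma norm_blaschkeFactor_le_one {a z : ℂ} (ha : ‖a‖ < 1) (hz : ‖z‖ ≤ 1) :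
    ‖blaschkeFactor a z‖ ≤ 1 := by
  rw [norm_blaschkeFactor (ne_one_of_norm_lt_one ha),
    div_le_one (norm_pos_iff.2 (one_sub_conj_mul_ne_zero ha hz))]
  exact norm_sub_le_norm_one_sub_conj_mul ha.le hz

lemma norm_blaschkeFactor_eq_one {a z : ℂ} (ha : ‖a‖ < 1) (hz : ‖z‖ = 1) :
    ‖blaschkeFactor a z‖ = 1 := by
  have hza : z - a ≠ 0 := sub_ne_zero.2 fun h => by rw [h] at hz; exact ha.ne hz
  rw [norm_blaschkeFactor (ne_one_of_norm_lt_one ha),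
    norm_one_sub_conj_mul_eq_norm_sub (Or.inr hz), div_self (norm_ne_zero_iff.2 hza)]

lemma norm_blaschke_le_one (m : ℕ) {e : ℕ} {a : Fin e → ℂ} (ha : ∀ k, ‖a k‖ < 1) {z : ℂ}
    (hz : ‖z‖ ≤ 1) : ‖blaschke m a z‖ ≤ 1 := by
  rw [blaschke_eq, norm_mul, norm_pow, norm_prod]
  exact mul_le_one₀ (pow_le_one₀ (norm_nonneg z) hz) (prod_nonneg fun k _ => norm_nonneg _)
    (prod_le_one (fun k _ => norm_nonneg _) fun k _ => norm_blaschkeFactor_le_one (ha k) hz)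

lemma norm_blaschke_eq_one (m : ℕ) {e : ℕ} {a : Fin e → ℂ} (ha : ∀ k, ‖a k‖ < 1) {z : ℂ}
    (hz : ‖z‖ = 1) : ‖blaschke m a z‖ = 1 := by
  simp only [blaschke_eq, norm_mul, norm_pow, norm_prod, hz, norm_blaschkeFactor_eq_one (ha _) hz,
    one_pow, prod_const_one, mul_one]

lemma mul_blaschkeFactorDeriv_of_norm_eq_one {a z : ℂ} (ha : ‖a‖ < 1) (hz : ‖z‖ = 1) :
    z * blaschkeFactorDeriv a z =
      ((1 - normSq a) / normSq (z - a) : ℝ) * blaschkeFactor a z := by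
  have h1 : 1 - a ≠ 0 := sub_ne_zero.2 (ne_one_of_norm_lt_one ha).symm
  have h2 : 1 - z * conj a ≠ 0 := by rw [mul_comm]; exact one_sub_conj_mul_ne_zero ha hz.le
  have h3 : z - a ≠ 0 := sub_ne_zero.2 fun h => by rw [h] at hz; exact ha.ne hz
  have hz1 : z * conj z = 1 := by rw [mul_conj, normSq_eq_norm_sq, hz]; norm_num
  rw [blaschkeFactorDeriv, blaschkeFactor, ofReal_div, ofReal_sub, ofReal_one,
    ← mul_conj, ← mul_conj, map_sub]
  have h4 : conj z - conj a ≠ 0 := by rw [← map_sub]; exact (map_ne_zero _).2 h3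
  field_simp
  linear_combination (1 - conj a) * (1 - conj a * a) * hz1

lemma mul_blaschkeDeriv_of_norm_eq_one (m : ℕ) {e : ℕ} {a : Fin e → ℂ} (ha : ∀ k, ‖a k‖ < 1)
    {z : ℂ} (hz : ‖z‖ = 1) :
    z * blaschkeDeriv m a z =
      blaschke m a z * ((m + ∑ k, (1 - normSq (a k)) / normSq (z - a k) : ℝ) : ℂ) := by
  have hpow : (m : ℂ) * (z * z ^ (m - 1)) = m * z ^ m := by
    rcases Nat.eq_zero_or_pos m with rfl | hm
    · simp
    · rw [mul_pow_sub_one hm.ne']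
  have hsum : z * ∑ k, (∏ j ∈ univ.erase k, blaschkeFactor (a j) z) * blaschkeFactorDeriv (a k) z
      = ∑ k, ((1 - normSq (a k)) / normSq (z - a k) : ℝ) * ∏ j, blaschkeFactor (a j) z := by
    rw [mul_sum]
    refine sum_congr rfl fun k _ => ?_
    rw [← prod_erase_mul _ _ (mem_univ k), mul_left_comm,
      mul_blaschkeFactorDeriv_of_norm_eq_one (ha k) hz]
    ring
  calc z * blaschkeDeriv m a z = m * (z * z ^ (m - 1)) * ∏ k, blaschkeFactor (a k) z + z ^ m *
      (z * ∑ k, (∏ j ∈ univ.erase k, blaschkeFactor (a j) z) * blaschkeFactorDeriv (a k) z) := by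
        rw [blaschkeDeriv]; ring
    _ = _ := by rw [hpow, hsum, blaschke_eq, ← sum_mul]; push_cast; ring

lemma blaschkeDeriv_ne_zero_of_norm_eq_one {m : ℕ} (hm : 0 < m) {e : ℕ} {a : Fin e → ℂ}
    (ha : ∀ k, ‖a k‖ < 1) {z : ℂ} (hz : ‖z‖ = 1) : blaschkeDeriv m a z ≠ 0 := by
  intro h
  have key := mul_blaschkeDeriv_of_norm_eq_one m ha hz
  rw [h, mul_zero, eq_comm, mul_eq_zero, ofReal_eq_zero] at key
  rcases key with h0 | h0
  · simpa [h0] using norm_blaschke_eq_one m ha hz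
  · have : 0 ≤ ∑ k, (1 - normSq (a k)) / normSq (z - a k) := by
      refine sum_nonneg fun k _ => div_nonneg ?_ (normSq_nonneg _)
      rw [sub_nonneg, normSq_eq_norm_sq]
      nlinarith [norm_nonneg (a k), ha k]
    have : (0 : ℝ) < m := Nat.cast_pos.2 hm
    linarith

section Limits

variable {α : Type*} {l : Filter α}

lemma Filter.Tendsto.blaschkeFactor {a z : α → ℂ} {a₀ z₀ : ℂ} (ha : Tendsto a l (𝓝 a₀))
    (hz : Tendsto z l (𝓝 z₀)) (h1 : a₀ ≠ 1) (h2 : 1 - conj a₀ * z₀ ≠ 0) :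
    Tendsto (fun x => blaschkeFactor (a x) (z x)) l (𝓝 (blaschkeFactor a₀ z₀)) := by
  have hc : Tendsto (fun x => conj (a x)) l (𝓝 (conj a₀)) :=
    (continuous_conj.tendsto a₀).comp ha
  have h1 : 1 - a₀ ≠ 0 := sub_ne_zero.2 h1.symm
  exact ((tendsto_const_nhds.sub hc).div (tendsto_const_nhds.sub ha) h1).mul
    ((hz.sub ha).div (tendsto_const_nhds.sub (hc.mul hz)) h2)

lemma Filter.Tendsto.blaschkeFactorDeriv {a z : α → ℂ} {a₀ z₀ : ℂ} (ha : Tendsto a l (𝓝 a₀))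
    (hz : Tendsto z l (𝓝 z₀)) (h1 : a₀ ≠ 1) (h2 : 1 - conj a₀ * z₀ ≠ 0) :
    Tendsto (fun x => blaschkeFactorDeriv (a x) (z x)) l (𝓝 (blaschkeFactorDeriv a₀ z₀)) := by
  have hc : Tendsto (fun x => conj (a x)) l (𝓝 (conj a₀)) :=
    (continuous_conj.tendsto a₀).comp ha
  have h1 : 1 - a₀ ≠ 0 := sub_ne_zero.2 h1.symm
  exact ((tendsto_const_nhds.sub hc).div (tendsto_const_nhds.sub ha) h1).mul
    ((tendsto_const_nhds.sub (hc.mul ha)).div ((tendsto_const_nhds.sub (hc.mul hz)).pow 2)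
      (pow_ne_zero 2 h2))

lemma tendsto_blaschkeDeriv (m : ℕ) {e : ℕ} {a : α → Fin e → ℂ} {a₀ : Fin e → ℂ} {z : α → ℂ}
    {z₀ : ℂ} (ha : ∀ k, Tendsto (fun x => a x k) l (𝓝 (a₀ k))) (hz : Tendsto z l (𝓝 z₀))
    (h1 : ∀ k, a₀ k ≠ 1) (h2 : ∀ k, 1 - conj (a₀ k) * z₀ ≠ 0) :
    Tendsto (fun x => blaschkeDeriv m (a x) (z x)) l (𝓝 (blaschkeDeriv m a₀ z₀)) := by
  have hf (k : Fin e) := (ha k).blaschkeFactor hz (h1 k) (h2 k)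
  have hf' (k : Fin e) := (ha k).blaschkeFactorDeriv hz (h1 k) (h2 k)
  exact ((tendsto_const_nhds.mul (hz.pow _)).mul (tendsto_finsetProd _ fun k _ => hf k)).add
    ((hz.pow m).mul (tendsto_finsetSum _ fun k _ =>
      (tendsto_finsetProd _ fun j _ => hf j).mul (hf' k)))

/- Only the norm converges: the unimodular constant `(1 - conj a) / (1 - a)` has no limit
as `a → 1` inside the disc. -/
lemma tendsto_norm_blaschkeFactor_of_norm_eq_one {a z : α → ℂ} {q z₀ : ℂ}
    (ha1 : ∀ x, a x ≠ 1) (ha : Tendsto a l (𝓝 q)) (hq : ‖q‖ = 1) (hz : Tendsto z l (𝓝 z₀))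
    (hzq : z₀ ≠ q) :
    Tendsto (fun x => ‖blaschkeFactor (a x) (z x)‖) l (𝓝 1) := by
  have hza : ‖z₀ - q‖ ≠ 0 := norm_ne_zero_iff.2 (sub_ne_zero.2 hzq)
  have hden : Tendsto (fun x => ‖1 - conj (a x) * z x‖) l (𝓝 ‖z₀ - q‖) := by
    rw [← norm_one_sub_conj_mul_eq_norm_sub (Or.inl hq)]
    exact (tendsto_const_nhds.sub (((continuous_conj.tendsto q).comp ha).mul hz)).norm
  have := (hz.sub ha).norm.div hden hza
  rw [div_self hza] at this
  exact this.congr fun x => (norm_blaschkeFactor (ha1 x) (z x)).symm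

lemma tendsto_blaschkeFactorDeriv_of_norm_eq_one {a z : α → ℂ} {q z₀ : ℂ}
    (ha1 : ∀ x, a x ≠ 1) (ha : Tendsto a l (𝓝 q)) (hq : ‖q‖ = 1) (hz : Tendsto z l (𝓝 z₀))
    (hzq : z₀ ≠ q) :
    Tendsto (fun x => blaschkeFactorDeriv (a x) (z x)) l (𝓝 0) := by
  have hconj := (continuous_conj.tendsto q).comp ha
  have hnum : Tendsto (fun x => ‖1 - conj (a x) * a x‖) l (𝓝 0) := by
    have := (tendsto_const_nhds (x := (1 : ℂ)).sub (hconj.mul ha)).norm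
    rwa [norm_one_sub_conj_mul_eq_norm_sub (Or.inl hq), sub_self, norm_zero] at this
  have hden : ‖1 - conj q * z₀‖ ^ 2 ≠ 0 := by
    rw [norm_one_sub_conj_mul_eq_norm_sub (Or.inl hq)]
    exact pow_ne_zero 2 (norm_ne_zero_iff.2 (sub_ne_zero.2 hzq))
  have := hnum.div ((tendsto_const_nhds.sub (hconj.mul hz)).norm.pow 2) hden
  rw [zero_div] at this
  exact tendsto_zero_iff_norm_tendsto_zero.2
    (this.congr fun x => (norm_blaschkeFactorDeriv (ha1 x) (z x)).symm)

lemma tendsto_norm_prod_blaschkeFactor_of_norm_eq_one {ι : Type*} (s : Finset ι)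
    {a : α → ι → ℂ} {q : ι → ℂ} {z : α → ℂ} {z₀ : ℂ} (ha1 : ∀ x k, a x k ≠ 1)
    (ha : ∀ k, Tendsto (fun x => a x k) l (𝓝 (q k))) (hq : ∀ k ∈ s, ‖q k‖ = 1)
    (hz : Tendsto z l (𝓝 z₀)) (hzq : ∀ k ∈ s, z₀ ≠ q k) :
    Tendsto (fun x => ‖∏ k ∈ s, blaschkeFactor (a x k) (z x)‖) l (𝓝 1) := by
  simpa only [norm_prod, prod_const_one] using tendsto_finsetProd s fun k hk =>
    tendsto_norm_blaschkeFactor_of_norm_eq_one (ha1 · k) (ha k) (hq k hk) hz (hzq k hk)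

lemma tendsto_deriv_prod_blaschkeFactor_of_norm_eq_one {ι : Type*} [DecidableEq ι]
    (s : Finset ι) {a : α → ι → ℂ} {q : ι → ℂ} {z : α → ℂ} {z₀ : ℂ} (ha1 : ∀ x k, a x k ≠ 1)
    (ha : ∀ k, Tendsto (fun x => a x k) l (𝓝 (q k))) (hq : ∀ k ∈ s, ‖q k‖ = 1)
    (hz : Tendsto z l (𝓝 z₀)) (hzq : ∀ k ∈ s, z₀ ≠ q k) :
    Tendsto (fun x => deriv (fun w => ∏ k ∈ s, blaschkeFactor (a x k) w) (z x)) l (𝓝 0) := by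
  have hden : ∀ᶠ x in l, ∀ k ∈ s, 1 - conj (a x k) * z x ≠ 0 := by
    refine (eventually_all_finset s).2 fun k hk => ?_
    have hlim := tendsto_const_nhds (x := (1 : ℂ)).sub
      (((continuous_conj.tendsto _).comp (ha k)).mul hz)
    refine hlim.eventually_ne ?_
    rw [← norm_ne_zero_iff, norm_one_sub_conj_mul_eq_norm_sub (Or.inl (hq k hk)),
      norm_ne_zero_iff]
    exact sub_ne_zero.2 (hzq k hk)
  have hterm : ∀ k ∈ s, Tendsto (fun x => (∏ j ∈ s.erase k, blaschkeFactor (a x j) (z x)) *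
      blaschkeFactorDeriv (a x k) (z x)) l (𝓝 0) := fun k hk => by
    rw [tendsto_zero_iff_norm_tendsto_zero]
    simpa only [norm_mul, norm_zero, one_mul] using
      (tendsto_norm_prod_blaschkeFactor_of_norm_eq_one (s.erase k) ha1 ha
        (fun j hj => hq j (mem_of_mem_erase hj)) hz fun j hj => hzq j (mem_of_mem_erase hj)).mul
      (tendsto_blaschkeFactorDeriv_of_norm_eq_one (ha1 · k) (ha k) (hq k hk) hz (hzq k hk)).norm
  simpa only [sum_const_zero] using (tendsto_finsetSum s hterm).congr'
    (hden.mono fun x hx => (hasDerivAt_prod_blaschkeFactor s (a x) hx).deriv.symm)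

end Limits

lemma eq_zero_of_mul_add_mul_eq_zero_of_tendsto {α 𝕜 : Type*} [NormedField 𝕜] {l : Filter α}
    [l.NeBot] {f f' g g' : α → 𝕜} {D : 𝕜} {C : ℝ} (h : ∀ x, f' x * g x + f x * g' x = 0)
    (hf : ∀ x, ‖f x‖ ≤ C) (hf' : Tendsto f' l (𝓝 D)) (hg : Tendsto (fun x => ‖g x‖) l (𝓝 1))
    (hg' : Tendsto g' l (𝓝 0)) : D = 0 := by
  have hlim : Tendsto (fun x => ‖f' x * g x‖) l (𝓝 (‖D‖ * 1)) := by
    simpa only [norm_mul] using hf'.norm.mul hg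
  have hzero : Tendsto (fun x => ‖f' x * g x‖) l (𝓝 0) := by
    refine squeeze_zero (fun x => norm_nonneg _) (fun x => ?_)
      (by simpa using hg'.norm.const_mul C)
    rw [eq_neg_of_add_eq_zero_left (h x), norm_neg, norm_mul]
    exact mul_le_mul_of_nonneg_right (hf x) (norm_nonneg _)
  rw [mul_one] at hlim
  exact norm_eq_zero.1 (tendsto_nhds_unique hlim hzero)

lemma blaschke_eq_mul_prod (m : ℕ) {d e : ℕ} (h : d ≤ e) (a : Fin e → ℂ) (z : ℂ) :
    blaschke m a z = blaschke m (fun k : Fin d => a (Fin.castLE h k)) z *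
      ∏ k ∈ univ.filter (fun k : Fin e => d ≤ (k : ℕ)), blaschkeFactor (a k) z := by
  have hmap : univ.map (Fin.castLEEmb h) = univ.filter (fun k : Fin e => ¬ d ≤ (k : ℕ)) := by
    ext k
    simp only [Finset.mem_map, mem_univ, true_and, mem_filter, not_le]
    exact ⟨fun ⟨j, hj⟩ => hj ▸ j.2, fun hk => ⟨⟨k, hk⟩, rfl⟩⟩
  rw [blaschke_eq, blaschke_eq, mul_assoc,
    ← prod_filter_not_mul_prod_filter univ (fun k : Fin e => d ≤ (k : ℕ)), ← hmap, prod_map]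
  rfl

lemma deriv_blaschke_eq_mul_prod (m : ℕ) {d e : ℕ} (h : d ≤ e) (a : Fin e → ℂ) {z : ℂ}
    (hz : ∀ k, 1 - conj (a k) * z ≠ 0) :
    deriv (blaschke m a) z =
      blaschkeDeriv m (fun k : Fin d => a (Fin.castLE h k)) z *
          ∏ k ∈ univ.filter (fun k : Fin e => d ≤ (k : ℕ)), blaschkeFactor (a k) z +
        blaschke m (fun k : Fin d => a (Fin.castLE h k)) z *
          deriv (fun w => ∏ k ∈ univ.filter (fun k : Fin e => d ≤ (k : ℕ)),
            blaschkeFactor (a k) w) z := by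
  have hG := hasDerivAt_blaschke m (fun k : Fin d => a (Fin.castLE h k)) fun k => hz _
  have hP := hasDerivAt_prod_blaschkeFactor (univ.filter fun k : Fin e => d ≤ (k : ℕ)) a
    fun k _ => hz k
  rw [funext (blaschke_eq_mul_prod m h a), deriv_fun_mul hG.differentiableAt hP.differentiableAt,
    hG.deriv]

theorem stmt10_general (m e d₁ : ℕ) (hm : 1 ≤ m) (hd : d₁ < e)
    (q : Fin e → ℂ)
    (hqin : ∀ k : Fin e, (k : ℕ) < d₁ → ‖q k‖ < 1)
    (hqbd : ∀ k : Fin e, d₁ ≤ (k : ℕ) → ‖q k‖ = 1)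
    (A : ℕ → Fin e → ℂ)
    (hA : ∀ n k, ‖A n k‖ < 1)
    (hAconv : ∀ k, Tendsto (fun n => A n k) atTop (nhds (q k)))
    (c : ℕ → ℂ) (hc : ∀ n, ‖c n‖ < 1)
    (hcrit : ∀ n, deriv (blaschke m (A n)) (c n) = 0)
    (clim : ℂ) (hclim : Tendsto c atTop (nhds clim)) :
    (‖clim‖ < 1 ∧
      deriv (blaschke m fun k : Fin d₁ => q (Fin.castLE hd.le k)) clim = 0) ∨
    (∃ k : Fin e, d₁ ≤ (k : ℕ) ∧ clim = q k) := by
  classical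
  by_cases hbd : ∃ k : Fin e, d₁ ≤ (k : ℕ) ∧ clim = q k
  · exact Or.inr hbd
  push Not at hbd
  set T := univ.filter fun k : Fin e => d₁ ≤ (k : ℕ)
  set a₀ : Fin d₁ → ℂ := fun k => q (Fin.castLE hd.le k)
  have hT (k : Fin e) (hk : k ∈ T) : d₁ ≤ (k : ℕ) := (mem_filter.1 hk).2
  have hA1 (n : ℕ) (k : Fin e) : A n k ≠ 1 := ne_one_of_norm_lt_one (hA n k)
  have hclim_le : ‖clim‖ ≤ 1 := le_of_tendsto' hclim.norm fun n => (hc n).le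
  have ha₀ (k : Fin d₁) : ‖a₀ k‖ < 1 := hqin _ k.2
  have hden (k : Fin d₁) : 1 - conj (a₀ k) * clim ≠ 0 := one_sub_conj_mul_ne_zero (ha₀ k) hclim_le
  have hB0 : blaschkeDeriv m a₀ clim = 0 :=
    eq_zero_of_mul_add_mul_eq_zero_of_tendsto
      (fun n => (deriv_blaschke_eq_mul_prod m hd.le (A n) fun k =>
        one_sub_conj_mul_ne_zero (hA n k) (hc n).le).symm.trans (hcrit n))
      (fun n => norm_blaschke_le_one m (fun k => hA n _) (hc n).le)
      (tendsto_blaschkeDeriv m (fun k => hAconv _) hclim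
        (fun k => ne_one_of_norm_lt_one (ha₀ k)) hden)
      (tendsto_norm_prod_blaschkeFactor_of_norm_eq_one T hA1 hAconv
        (fun k hk => hqbd k (hT k hk)) hclim fun k hk => hbd k (hT k hk))
      (tendsto_deriv_prod_blaschkeFactor_of_norm_eq_one T hA1 hAconv
        (fun k hk => hqbd k (hT k hk)) hclim fun k hk => hbd k (hT k hk))
  refine Or.inl ⟨lt_of_le_of_ne hclim_le fun h => ?_, ?_⟩
  · exact blaschkeDeriv_ne_zero_of_norm_eq_one hm ha₀ h hB0
  · rw [(hasDerivAt_blaschke m a₀ hden).deriv, hB0]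

/-- In the degenerating setup (boundary points `q k`, `d₁ ≤ k`, arbitrary,
repetitions allowed), let `(c n)` be a sequence in `𝔻` with `(B n)'(c n) = 0` and
`c n → c`. Then either `c ∈ 𝔻` and `B'(c) = 0`, or `c` is one of the boundary points. -/
theorem stmt10 (m e d₁ : ℕ) (hm : 1 ≤ m) (he : 1 ≤ e) (hd : d₁ < e)
    (q : Fin e → ℂ)
    (hqin : ∀ k : Fin e, (k : ℕ) < d₁ → ‖q k‖ < 1)
    (hqbd : ∀ k : Fin e, d₁ ≤ (k : ℕ) → ‖q k‖ = 1)
    (A : ℕ → Fin e → ℂ)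
    (hA : ∀ n k, ‖A n k‖ < 1)
    (hAconv : ∀ k, Tendsto (fun n => A n k) atTop (nhds (q k)))
    (c : ℕ → ℂ) (hc : ∀ n, ‖c n‖ < 1)
    (hcrit : ∀ n, deriv (blaschke m (A n)) (c n) = 0)
    (clim : ℂ) (hclim : Tendsto c atTop (nhds clim)) :
    (‖clim‖ < 1 ∧
      deriv (blaschke m fun k : Fin d₁ => q (Fin.castLE hd.le k)) clim = 0) ∨
    (∃ k : Fin e, d₁ ≤ (k : ℕ) ∧ clim = q k) :=
  stmt10_general m e d₁ hm hd q hqin hqbd A hA hAconv c hc hcrit clim hclim
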